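/- arXiv:hep-th/9409104 — 2 statements merged into one kernel-verified Lean document; each statement's English description precedes it below -/
import Mathlib

section
/- The alternating trilinear forms T₁ and T₂ on so(3,1) are linearly independent over ℝ: if a T₁ + b T₂ = 0 as a trilinear form on so(3,1) for real numbers a, b, then a = b = 0. -/
open Matrix

attribute [local instance 100] LieRing.ofAssociativeRing

noncomputable section

/-- The Minkowski metric `η = diag(−1,1,1,1)`. -/
def eta : Matrix (Fin 4) (Fin 4) ℝ := Matrix.diagonal ![-1, 1, 1, 1]

/-- The real Lie algebra `so(3,1)`: 4×4 real matrices `A` with `Aᵀη + ηA = 0`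
(skew-adjoint with respect to `η`), with the matrix commutator as bracket. -/
def so31 : LieSubalgebra ℝ (Matrix (Fin 4) (Fin 4) ℝ) :=
  skewAdjointMatricesLieSubalgebra eta

/-- The totally antisymmetric symbol `ε` with `ε^{0123} = 1` (realized as the
determinant of the corresponding rows of the identity matrix). -/
def eps (a b c d : Fin 4) : ℝ :=
  Matrix.det (Matrix.of fun i j => if ![a, b, c, d] i = j then (1 : ℝ) else 0)

/-- The trilinear form `T₁(A,B,C) = tr(A[B,C])` on `so(3,1)`. -/
def T1 (A B C : so31) : ℝ :=
  Matrix.trace ((A : Matrix (Fin 4) (Fin 4) ℝ) *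
    ((B : Matrix (Fin 4) (Fin 4) ℝ) * (C : Matrix (Fin 4) (Fin 4) ℝ) -
     (C : Matrix (Fin 4) (Fin 4) ℝ) * (B : Matrix (Fin 4) (Fin 4) ℝ)))

/-- The trilinear form
`T₂(A,B,C) = Σ_{a,b,c,d,e,f} ε^{abcd} η^{ef} (ηA)_{ab} (ηB)_{ce} (ηC)_{df}`
on `so(3,1)` (here `η^{ef}` are the entries of `η⁻¹ = η`). -/
def T2 (A B C : so31) : ℝ :=
  ∑ a, ∑ b, ∑ c, ∑ d, ∑ e, ∑ f,
    eps a b c d * eta e f * (eta * (A : Matrix (Fin 4) (Fin 4) ℝ)) a b *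
      (eta * (B : Matrix (Fin 4) (Fin 4) ℝ)) c e *
      (eta * (C : Matrix (Fin 4) (Fin 4) ℝ)) d f

/- `T₁(A,B,C)` is the trace form applied to `A` and `[B,C]`, and `T₂(A,B,C)` is, up to a factor,
the `ε`-pairing of `A` with `[B,C]`, i.e. the trace form against the Hodge dual of `[B,C]`. The
bracket of the rotations in the `(2,0)`- and `(0,1)`-planes is a multiple of the rotation in the
`(1,2)`-plane; the trace form makes rotations orthogonal to boosts, and the Hodge dual exchanges
them. Hence pairing that bracket with the rotation in the `(1,2)`-plane is seen only by `T₁`, and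
pairing it with the boost along the first axis only by `T₂`. -/

lemma mem_so31_iff {M : Matrix (Fin 4) (Fin 4) ℝ} : M ∈ so31 ↔ Mᵀ * eta = eta * -M := by
  rw [so31, mem_skewAdjointMatricesLieSubalgebra, mem_skewAdjointMatricesSubmodule]
  rfl

lemma eta_eq_diagonal_cons : eta = diagonal (Fin.cons (-1) 1) := by
  rw [eta]
  congr
  ext i
  fin_cases i <;> rfl

lemma eps_eq_zero_of_not_injective {a b c d : Fin 4} (h : ¬ Function.Injective ![a, b, c, d]) :
    eps a b c d = 0 := by
  obtain ⟨i, j, hij, hne⟩ : ∃ i j, ![a, b, c, d] i = ![a, b, c, d] j ∧ i ≠ j := by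
    simpa [Function.Injective] using h
  exact det_zero_of_row_eq hne (by ext k; simp [hij])

lemma eps_eq_sign (σ : Equiv.Perm (Fin 4)) : eps (σ 0) (σ 1) (σ 2) (σ 3) = σ.sign := by
  have hσ : ![σ 0, σ 1, σ 2, σ 3] = σ := by
    ext i
    fin_cases i <;> rfl
  rw [eps, hσ, ← det_permutation σ]
  congr
  ext i j
  simp

namespace so31

-- Spatial axis `k : Fin 3` is the coordinate `k.succ : Fin 4`; coordinate `0` is time.
def rotation (i j : Fin 3) : so31 :=
  ⟨single i.succ j.succ 1 - single j.succ i.succ 1, by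
    rw [mem_so31_iff, eta_eq_diagonal_cons]
    ext a b
    rw [mul_diagonal, diagonal_mul]
    induction a using Fin.cases <;> induction b using Fin.cases <;> simp [single_apply, and_comm]⟩

def boost (k : Fin 3) : so31 :=
  ⟨single 0 k.succ 1 + single k.succ 0 1, by
    rw [mem_so31_iff, eta_eq_diagonal_cons]
    ext a b
    rw [mul_diagonal, diagonal_mul]
    induction a using Fin.cases <;> induction b using Fin.cases <;> simp [single_apply] <;> grind⟩

lemma T1_rotations : T1 (rotation 1 2) (rotation 2 0) (rotation 0 1) = 2 := by
  simp [T1, rotation, trace, mul_apply, Fin.sum_univ_four, single_apply, one_add_one_eq_two]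

lemma T1_boost_rotations : T1 (boost 0) (rotation 2 0) (rotation 0 1) = 0 := by
  simp [T1, rotation, boost, trace, mul_apply, Fin.sum_univ_four, single_apply]

lemma T2_rotations : T2 (rotation 1 2) (rotation 2 0) (rotation 0 1) = 0 := by
  have h₁ : eps 2 3 3 2 = 0 := eps_eq_zero_of_not_injective (by decide)
  have h₂ : eps 3 2 3 2 = 0 := eps_eq_zero_of_not_injective (by decide)
  simp [T2, rotation, eta, mul_apply, Fin.sum_univ_four, single_apply, h₁, h₂]

lemma T2_boost_rotations : T2 (boost 0) (rotation 2 0) (rotation 0 1) = -2 := by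
  have h₁ : eps 0 1 3 2 = -1 := by
    simpa [Equiv.swap_apply_of_ne_of_ne, Equiv.Perm.sign_swap] using eps_eq_sign (.swap 2 3)
  have h₂ : eps 1 0 3 2 = 1 := by
    have h := eps_eq_sign (.swap 0 1 * .swap 2 3)
    rw [Equiv.Perm.sign_mul, Equiv.Perm.sign_swap (by decide),
      Equiv.Perm.sign_swap (by decide)] at h
    simpa [Equiv.swap_apply_of_ne_of_ne] using h
  simp [T2, rotation, boost, eta, mul_apply, Fin.sum_univ_four, single_apply, h₁, h₂]
  norm_num

end so31

/-- the alternating trilinear forms `T₁` and `T₂` on `so(3,1)` are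
linearly independent over `ℝ`: if `a T₁ + b T₂ = 0` as a trilinear form, then
`a = b = 0`. -/
theorem T1_T2_linearly_independent (a b : ℝ)
    (h : ∀ A B C : so31, a * T1 A B C + b * T2 A B C = 0) :
    a = 0 ∧ b = 0 := by
  have hJ := h (so31.rotation 1 2) (so31.rotation 2 0) (so31.rotation 0 1)
  have hK := h (so31.boost 0) (so31.rotation 2 0) (so31.rotation 0 1)
  rw [so31.T1_rotations, so31.T2_rotations] at hJ
  rw [so31.T1_boost_rotations, so31.T2_boost_rotations] at hK
  constructor <;> linarith
end
end

section
/- The wedge product T₁ ∧ T₂ of the alternating trilinear forms T₁ and T₂ is a nonzero alternating 6-linear form on the 6-dimensional Lie algebra so(3,1), and it is not a Chevalley–Eilenberg 6-coboundary: there is no alternating 5-linear form b : so(3,1)⁵ → ℝ with T₁ ∧ T₂ = db. In particular, T₁ ∧ T₂ represents a nontrivial class in the degree-six Lie algebra cohomology of so(3,1) with trivial real coefficients. -/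
open Matrix

attribute [local instance 100] LieRing.ofAssociativeRing

noncomputable section

/-- The Chevalley–Eilenberg differential (trivial real coefficients) of an
`(m+1)`-cochain:
`(dc)(x₀,…,x_{m+1}) = Σ_{i<j} (−1)^{i+j} c([x_i,x_j], x₀,…,x̂_i,…,x̂_j,…,x_{m+1})`. -/
def ceDiff {g : Type*} [LieRing g] {m : ℕ}
    (c : (Fin (m + 1) → g) → ℝ) : (Fin (m + 2) → g) → ℝ :=
  fun x => ∑ i : Fin (m + 2), ∑ j : Fin (m + 2),
    if hij : i < j then
      (-1 : ℝ) ^ ((i : ℕ) + (j : ℕ)) *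
        c (Fin.cons ⁅x i, x j⁆ fun t : Fin m =>
            x (j.succAbove ((⟨(i : ℕ), by
                have h1 : (i : ℕ) < (j : ℕ) := hij
                have h2 := j.isLt
                omega⟩ : Fin (m + 1)).succAbove t)))
    else 0

/-- The wedge product of two alternating trilinear forms (the usual antisymmetrized
product, with the shuffle normalization `1/(3!·3!)`). -/
def wedge33 (f h : (Fin 3 → so31) → ℝ) : (Fin 6 → so31) → ℝ :=
  fun x => (1 / 36 : ℝ) * ∑ σ : Equiv.Perm (Fin 6),
    ((Equiv.Perm.sign σ : ℤ) : ℝ) *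
      f (fun i : Fin 3 => x (σ (Fin.castAdd 3 i))) *
      h (fun i : Fin 3 => x (σ (Fin.addNat i 3)))

/-!
A matrix that is skew-adjoint for a diagonal form is determined by its entries above the
diagonal, which are arbitrary, so `so(3,1)` has dimension `6`. On the basis of `so(3,1)` formed
by three rotations and three boosts, `T₁` and `T₂` are explicit integer combinations of
elementary 3-forms, and `T₁ ∧ T₂` takes the value `16`. On the other hand, the bracket of two
basis vectors is a multiple of a third one, so every term of `(db)(e₀, …, e₅)` evaluates the
alternating form `b` on a linearly dependent family, and `db` vanishes on the basis for every
alternating 5-form `b`.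
-/

theorem AlternatingMap.map_cons_eq_zero_of_mem_span {R M N : Type*} [CommRing R]
    [AddCommGroup M] [Module R M] [AddCommGroup N] [Module R N] {n : ℕ}
    (b : M [⋀^Fin (n + 1)]→ₗ[R] N) {z : M} {v : Fin n → M}
    (hz : z ∈ Submodule.span R (Set.range v)) : b (Fin.cons z v) = 0 := by
  let L := b.toMultilinearMap.toLinearMap (Fin.cons 0 v) 0
  have hL : ∀ w, L w = b (Fin.cons w v) := fun w => by
    simp [L, Fin.update_cons_zero]
  suffices Submodule.span R (Set.range v) ≤ LinearMap.ker L by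
    simpa [hL] using this hz
  rw [Submodule.span_le]
  rintro _ ⟨t, rfl⟩
  simpa [hL] using b.map_eq_zero_of_eq (Fin.cons (v t) v) (i := 0) (j := t.succ) rfl
    (Fin.succ_ne_zero t).symm

theorem ceDiff_eq_zero_of_bracket_mem_span {g : Type*} [LieRing g] [Module ℝ g] {m : ℕ}
    (b : g [⋀^Fin (m + 1)]→ₗ[ℝ] ℝ) (x : Fin (m + 2) → g)
    (hx : ∀ i j, i < j → ⁅x i, x j⁆ ∈ Submodule.span ℝ (x '' {i, j}ᶜ)) :
    ceDiff b x = 0 := by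
  refine Finset.sum_eq_zero fun i _ => Finset.sum_eq_zero fun j _ => ?_
  split_ifs with hij
  · refine mul_eq_zero_of_right _ (b.map_cons_eq_zero_of_mem_span ?_)
    refine Submodule.span_mono ?_ (hx i j hij)
    rintro _ ⟨k, hk, rfl⟩
    simp only [Set.mem_compl_iff, Set.mem_insert_iff, Set.mem_singleton_iff, not_or] at hk
    obtain ⟨k', rfl⟩ := Fin.exists_succAbove_eq hk.2
    set i' : Fin (m + 1) := ⟨i, by omega⟩
    have hi' : j.succAbove i' = i := Fin.succAbove_of_castSucc_lt _ _ hij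
    obtain ⟨t, rfl⟩ := Fin.exists_succAbove_eq (x := k') (y := i') fun h => hk.1 (h ▸ hi')
    exact ⟨t, rfl⟩
  · rfl

theorem wedge33_eq_zero_of_eq (f h : (Fin 3 → so31) → ℝ) {x : Fin 6 → so31} {i j : Fin 6}
    (hij : i ≠ j) (hx : x i = x j) : wedge33 f h x = 0 := by
  have hswap : ∀ k, x (Equiv.swap i j k) = x k := fun k => by
    rw [Equiv.swap_apply_def]; split_ifs <;> simp_all
  rw [wedge33, mul_eq_zero]
  refine Or.inr (CharZero.neg_eq_self_iff.mp ?_)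
  rw [← Finset.sum_neg_distrib]
  refine Fintype.sum_equiv (Equiv.mulLeft (Equiv.swap i j)) _ _ fun σ => ?_
  simp [Equiv.Perm.sign_mul, Equiv.Perm.sign_swap hij, hswap]

theorem Equiv.Perm.sum_eq_sum_decomposeFin_symm {n : ℕ} {M : Type*} [AddCommMonoid M]
    (g : Equiv.Perm (Fin (n + 1)) → M) :
    ∑ σ, g σ = ∑ i, ∑ τ : Equiv.Perm (Fin n), g (Equiv.Perm.decomposeFin.symm (i, τ)) := by
  rw [← Equiv.sum_comp Equiv.Perm.decomposeFin.symm g, Fintype.sum_prod_type]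

section SkewAdjointDiagonal

variable {K n : Type*} [Field K] [Fintype n] [DecidableEq n] {s : n → K}

theorem mem_skewAdjointMatricesSubmodule_diagonal_iff {A : Matrix n n K} :
    A ∈ skewAdjointMatricesSubmodule (diagonal s) ↔ ∀ a b, A b a * s b = -(s a * A a b) := by
  rw [mem_skewAdjointMatricesSubmodule, Matrix.IsSkewAdjoint, Matrix.IsAdjointPair,
    ← Matrix.ext_iff]
  simp [Matrix.mul_diagonal, Matrix.diagonal_mul]

variable [LinearOrder n]

variable (s) in
def skewAdjointUpperCoords :
    skewAdjointMatricesSubmodule (diagonal s) →ₗ[K] ({p : n × n // p.1 < p.2} → K) where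
  toFun A p := (A : Matrix n n K) p.1.1 p.1.2
  map_add' _ _ := rfl
  map_smul' _ _ := rfl

theorem skewAdjointUpperCoords_injective [NeZero (2 : K)] (hs : ∀ a, s a ≠ 0) :
    Function.Injective (skewAdjointUpperCoords s) := by
  rw [← LinearMap.ker_eq_bot, LinearMap.ker_eq_bot']
  rintro ⟨A, hA⟩ h0
  have hupper : ∀ a b, a < b → A a b = 0 := fun a b hab => congr_fun h0 ⟨(a, b), hab⟩
  rw [mem_skewAdjointMatricesSubmodule_diagonal_iff] at hA
  ext a b : 2
  rcases lt_trichotomy a b with hab | rfl | hba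
  · exact hupper a b hab
  · have := hA a a
    have h2 : (2 : K) * s a * A a a = 0 := by linear_combination this
    simpa [hs a, NeZero.ne] using h2
  · simpa [hupper b a hba, hs a] using hA a b

theorem skewAdjointUpperCoords_surjective (hs : ∀ a, s a ≠ 0) :
    Function.Surjective (skewAdjointUpperCoords s) := by
  intro v
  let A : Matrix n n K := Matrix.of fun a b =>
    if h : a < b then v ⟨(a, b), h⟩ else if h : b < a then -(s b / s a) * v ⟨(b, a), h⟩ else 0
  have hA : A ∈ skewAdjointMatricesSubmodule (diagonal s) := by
    rw [mem_skewAdjointMatricesSubmodule_diagonal_iff]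
    intro a b
    rcases lt_trichotomy a b with hab | rfl | hba
    · simp [A, hab, hab.not_gt]
      field_simp [hs b]
    · simp [A]
    · simp [A, hba, hba.not_gt]
      field_simp [hs a]
  exact ⟨⟨A, hA⟩, funext fun p => dif_pos p.2⟩

theorem finrank_skewAdjointMatricesSubmodule_diagonal [NeZero (2 : K)] (hs : ∀ a, s a ≠ 0) :
    Module.finrank K (skewAdjointMatricesSubmodule (diagonal s)) =
      Fintype.card {p : n × n // p.1 < p.2} := by
  rw [(LinearEquiv.ofBijective _ ⟨skewAdjointUpperCoords_injective hs,
    skewAdjointUpperCoords_surjective hs⟩).finrank_eq, Module.finrank_fintype_fun_eq_card]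

end SkewAdjointDiagonal

theorem finrank_so31 : Module.finrank ℝ so31 = 6 := by
  have : Module.finrank ℝ so31 = Module.finrank ℝ (skewAdjointMatricesSubmodule eta) := rfl
  rw [this, eta, finrank_skewAdjointMatricesSubmodule_diagonal]
  · rfl
  · intro a; fin_cases a <;> simp

-- Computations on the basis are done over `ℤ`, where `decide` can check them, and transported
-- to `ℝ` along `castMatrix`.
def etaInt : Matrix (Fin 4) (Fin 4) ℤ := diagonal ![-1, 1, 1, 1]

-- the rotations `J₁, J₂, J₃` followed by the boosts `K₁, K₂, K₃`
def lorentzBasisInt : Fin 6 → Matrix (Fin 4) (Fin 4) ℤ :=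
  ![!![0, 0, 0, 0; 0, 0, 0, 0; 0, 0, 0, 1; 0, 0, -1, 0],
    !![0, 0, 0, 0; 0, 0, 0, -1; 0, 0, 0, 0; 0, 1, 0, 0],
    !![0, 0, 0, 0; 0, 0, 1, 0; 0, -1, 0, 0; 0, 0, 0, 0],
    !![0, 1, 0, 0; 1, 0, 0, 0; 0, 0, 0, 0; 0, 0, 0, 0],
    !![0, 0, 1, 0; 0, 0, 0, 0; 1, 0, 0, 0; 0, 0, 0, 0],
    !![0, 0, 0, 1; 0, 0, 0, 0; 0, 0, 0, 0; 1, 0, 0, 0]]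

abbrev castMatrix : Matrix (Fin 4) (Fin 4) ℤ →+* Matrix (Fin 4) (Fin 4) ℝ :=
  (Int.castRingHom ℝ).mapMatrix

theorem eta_eq_castMatrix : eta = castMatrix etaInt := by
  rw [eta, etaInt, RingHom.mapMatrix_apply, Matrix.diagonal_map (map_zero _)]
  congr 1
  ext i
  fin_cases i <;> simp

theorem lorentzBasisInt_isSkewAdjoint :
    ∀ k, (lorentzBasisInt k)ᵀ * etaInt = etaInt * -lorentzBasisInt k := by
  decide

def lorentzBasis (k : Fin 6) : so31 :=
  ⟨castMatrix (lorentzBasisInt k), by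
    have h := congrArg castMatrix (lorentzBasisInt_isSkewAdjoint k)
    rw [map_mul, map_mul, map_neg, ← eta_eq_castMatrix, RingHom.mapMatrix_apply,
      Matrix.transpose_map, ← RingHom.mapMatrix_apply] at h
    exact (mem_skewAdjointMatricesSubmodule _ _).mpr h⟩

theorem coe_lorentzBasis (k : Fin 6) :
    (lorentzBasis k : Matrix (Fin 4) (Fin 4) ℝ) = castMatrix (lorentzBasisInt k) := rfl

theorem lorentzBasisInt_commutator : ∀ i j : Fin 6, i < j → ∃ k, k ≠ i ∧ k ≠ j ∧
    ∃ c ∈ ({-1, 0, 1} : Finset ℤ), lorentzBasisInt i * lorentzBasisInt j -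
      lorentzBasisInt j * lorentzBasisInt i = c • lorentzBasisInt k := by
  decide

theorem lie_lorentzBasis_mem_span {i j : Fin 6} (hij : i < j) :
    ⁅lorentzBasis i, lorentzBasis j⁆ ∈ Submodule.span ℝ (lorentzBasis '' {i, j}ᶜ) := by
  obtain ⟨k, hki, hkj, c, -, hc⟩ := lorentzBasisInt_commutator i j hij
  have hlie : ⁅lorentzBasis i, lorentzBasis j⁆ = (c : ℝ) • lorentzBasis k := by
    apply Subtype.ext
    have hc' := congrArg castMatrix hc
    rwa [map_sub, map_mul, map_mul, map_zsmul, ← Int.cast_smul_eq_zsmul ℝ] at hc'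
  rw [hlie]
  exact Submodule.smul_mem _ _ (Submodule.subset_span ⟨k, by simp [hki, hkj], rfl⟩)

-- the sign of the Vandermonde product `∏_{i<j} (x_j - x_i)` of `(a, b, c, d)`
def epsInt (a b c d : Fin 4) : ℤ :=
  Int.sign (((b : ℤ) - a) * (c - a) * (d - a) * (c - b) * (d - b) * (d - c))

set_option maxRecDepth 10000 in
theorem eps_eq_epsInt (a b c d : Fin 4) : eps a b c d = epsInt a b c d := by
  have hdet : ∀ a b c d : Fin 4,
      (Matrix.of fun i j => if ![a, b, c, d] i = j then (1 : ℤ) else 0).det = epsInt a b c d := by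
    decide
  rw [eps, ← hdet, ← eq_intCast (Int.castRingHom ℝ), RingHom.map_det]
  congr 1
  ext i j
  simp [apply_ite]

-- `(eⁱ ∧ eʲ ∧ eᵏ)(e_a, e_b, e_c)`, valid for distinct `i j k`
def elem3 (i j k a b c : Fin 6) : ℤ :=
  if (a, b, c) = (i, j, k) ∨ (a, b, c) = (j, k, i) ∨ (a, b, c) = (k, i, j) then 1
  else if (a, b, c) = (j, i, k) ∨ (a, b, c) = (i, k, j) ∨ (a, b, c) = (k, j, i) then -1 else 0

def T1OnBasis (a b c : Fin 6) : ℤ :=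
  2 * (elem3 0 1 2 a b c - elem3 0 4 5 a b c + elem3 1 3 5 a b c - elem3 2 3 4 a b c)

def T2OnBasis (a b c : Fin 6) : ℤ :=
  2 * (elem3 3 4 5 a b c - elem3 0 1 5 a b c + elem3 0 2 4 a b c - elem3 1 2 3 a b c)

theorem T1_lorentzBasis (a b c : Fin 6) :
    T1 (lorentzBasis a) (lorentzBasis b) (lorentzBasis c) = T1OnBasis a b c := by
  have h : ∀ a b c, (lorentzBasisInt a * (lorentzBasisInt b * lorentzBasisInt c -
      lorentzBasisInt c * lorentzBasisInt b)).trace = T1OnBasis a b c := by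
    decide
  rw [← h, T1, coe_lorentzBasis, coe_lorentzBasis, coe_lorentzBasis, ← map_mul, ← map_mul,
    ← map_sub, ← map_mul, RingHom.mapMatrix_apply, ← AddMonoidHom.map_trace]
  rfl

-- The contracted factor stands outermost so that `decide` evaluates each of its entries once.
theorem T2_eq_sum (A B C : so31) : T2 A B C =
    ∑ r, ∑ s, ((eta * (B : Matrix (Fin 4) (Fin 4) ℝ)) * eta *
      (eta * (C : Matrix (Fin 4) (Fin 4) ℝ))ᵀ) r s *
        ∑ p, ∑ q, eps p q r s * (eta * (A : Matrix (Fin 4) (Fin 4) ℝ)) p q := by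
  set X := eta * (A : Matrix (Fin 4) (Fin 4) ℝ)
  set Y := eta * (B : Matrix (Fin 4) (Fin 4) ℝ)
  set Z := eta * (C : Matrix (Fin 4) (Fin 4) ℝ)
  have hG : ∀ c d, (Y * eta * Zᵀ) c d = ∑ e, ∑ f, eta e f * Y c e * Z d f := fun c d => by
    simp only [Matrix.mul_apply, Matrix.transpose_apply, Finset.sum_mul]
    rw [Finset.sum_comm]
    simp only [mul_comm]
  calc T2 A B C = ∑ a, ∑ b, ∑ c, ∑ d, (Y * eta * Zᵀ) c d * (eps a b c d * X a b) := by
        simp only [T2, hG, Finset.sum_mul, X, Y, Z]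
        simp only [mul_comm, mul_assoc, mul_left_comm]
    _ = ∑ p : Fin 4 × Fin 4, ∑ r : Fin 4 × Fin 4,
          (Y * eta * Zᵀ) r.1 r.2 * (eps p.1 p.2 r.1 r.2 * X p.1 p.2) := by
        simp only [Fintype.sum_prod_type]
    _ = _ := by
        rw [Finset.sum_comm]
        simp only [Fintype.sum_prod_type, Finset.mul_sum]

theorem T2_lorentzBasis (a b c : Fin 6) :
    T2 (lorentzBasis a) (lorentzBasis b) (lorentzBasis c) = T2OnBasis a b c := by
  have h : ∀ a b c, ∑ r, ∑ s, ((etaInt * lorentzBasisInt b) * etaInt *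
      (etaInt * lorentzBasisInt c)ᵀ) r s *
        ∑ p, ∑ q, epsInt p q r s * (etaInt * lorentzBasisInt a) p q = T2OnBasis a b c := by
    decide
  rw [← h, T2_eq_sum]
  simp only [coe_lorentzBasis, eta_eq_castMatrix, ← map_mul]
  simp only [RingHom.mapMatrix_apply, ← Matrix.transpose_map, ← Matrix.map_mul, Matrix.map_apply,
    eq_intCast, eps_eq_epsInt]
  push_cast
  rfl

theorem wedge33_T1_T2_lorentzBasis :
    wedge33 (fun y => T1 (y 0) (y 1) (y 2)) (fun y => T2 (y 0) (y 1) (y 2)) lorentzBasis = 16 := by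
  have h : ∑ σ : Equiv.Perm (Fin 6), (Equiv.Perm.sign σ : ℤ) *
      (T1OnBasis (σ 0) (σ 1) (σ 2) * T2OnBasis (σ 3) (σ 4) (σ 5)) = 576 := by
    -- unfolding `S₆` into nested sums over `Fin` makes the sum computable by `decide`
    simp only [Equiv.Perm.sum_eq_sum_decomposeFin_symm, Equiv.Perm.decomposeFin.symm_sign,
      Units.val_mul]
    decide
  have h' := congrArg (Int.cast : ℤ → ℝ) h
  push_cast at h'
  rw [wedge33, ← show (1 / 36 : ℝ) * 576 = 16 by norm_num, ← h']
  simp only [T1_lorentzBasis, T2_lorentzBasis, mul_assoc]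
  rfl

/-- the wedge product `T₁ ∧ T₂` is a nonzero alternating 6-linear form
on the 6-dimensional Lie algebra `so(3,1)` and is not a Chevalley–Eilenberg
6-coboundary; hence it represents a nontrivial class in `H⁶(so(3,1);ℝ)`. -/
theorem wedge_T1_T2_nontrivial_in_degree_six :
    Module.finrank ℝ so31 = 6 ∧
    (∃ x : Fin 6 → so31,
      wedge33 (fun y => T1 (y 0) (y 1) (y 2)) (fun y => T2 (y 0) (y 1) (y 2)) x ≠ 0) ∧
    (∀ (x : Fin 6 → so31) (i j : Fin 6), i ≠ j → x i = x j →
      wedge33 (fun y => T1 (y 0) (y 1) (y 2)) (fun y => T2 (y 0) (y 1) (y 2)) x = 0) ∧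
    ¬ ∃ b : AlternatingMap ℝ so31 ℝ (Fin 5),
        ∀ x : Fin 6 → so31,
          wedge33 (fun y => T1 (y 0) (y 1) (y 2)) (fun y => T2 (y 0) (y 1) (y 2)) x
            = ceDiff (⇑b) x := by
  refine ⟨finrank_so31, ⟨lorentzBasis, by rw [wedge33_T1_T2_lorentzBasis]; norm_num⟩,
    fun x i j hij hx => wedge33_eq_zero_of_eq _ _ hij hx, ?_⟩
  rintro ⟨b, hb⟩
  have h := hb lorentzBasis
  rw [wedge33_T1_T2_lorentzBasis,
    ceDiff_eq_zero_of_bracket_mem_span b _ fun _ _ => lie_lorentzBasis_mem_span] at h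
  norm_num at h
end
end
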